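/- arXiv:2312.01368 — 3 statements merged into one kernel-verified Lean document; each statement's English description precedes it below -/
import Mathlib

section
/- For integers n ≥ 1 and t > 0, the modified Bessel functions of the first kind satisfy I_{n+1}(t)/I_n(t) ≥ √(1 + ((n+1)/t)²) - (n+1)/t. -/
/-!
With `A, B, C = I_n(t), I_{n+1}(t), I_{n+2}(t)` and `a = (n+1)/t`, the recurrence
`A = C + 2aB` and the Turán inequality `AC ≤ B²` give `A² ≤ B² + 2aAB`, i.e.
`(a + B/A)² ≥ 1 + a²`. The Turán inequality is proved coefficientwise on the Cauchy product
of the power series: by Vandermonde's identity the coefficients of `(t/2)^(2N)` in `I_n I_{n+2}`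
and in `I_{n+1}²` are `binom(2N, N-1)` and `binom(2N, N)`, both divided by `(N-n-1)! (N+n+1)!`.
-/

/-- Modified Bessel function of the first kind of integer order `m` (with the
convention `I_{-m} = I_m`), via its power series. -/
noncomputable def besselI (m : ℤ) (t : ℝ) : ℝ :=
  ∑' k : ℕ, (t / 2) ^ (2 * k + m.natAbs) / ((k.factorial : ℝ) * ((k + m.natAbs).factorial : ℝ))

open Finset

noncomputable def besselTerm (x : ℝ) (μ k : ℕ) : ℝ :=
  x ^ (2 * k + μ) / ((k.factorial : ℝ) * ((k + μ).factorial : ℝ))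

lemma besselI_eq_tsum (m : ℤ) (t : ℝ) :
    besselI m t = ∑' k, besselTerm (t / 2) m.natAbs k :=
  rfl

lemma besselTerm_pos {x : ℝ} (hx : 0 < x) (μ k : ℕ) : 0 < besselTerm x μ k := by
  unfold besselTerm; positivity

lemma norm_besselTerm (x : ℝ) (μ k : ℕ) : ‖besselTerm x μ k‖ = besselTerm |x| μ k := by
  simp [besselTerm]

lemma besselTerm_le {x : ℝ} (hx : 0 ≤ x) (μ k : ℕ) :
    besselTerm x μ k ≤ x ^ μ * ((x ^ 2) ^ k / k.factorial) := by
  rw [besselTerm, ← mul_div_assoc, ← pow_mul, ← pow_add, add_comm μ]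
  gcongr
  exact le_mul_of_one_le_right (by positivity) (mod_cast (k + μ).factorial_pos)

lemma summable_norm_besselTerm (x : ℝ) (μ : ℕ) : Summable fun k => ‖besselTerm x μ k‖ :=
  .of_nonneg_of_le (fun _ => norm_nonneg _)
    (fun k => (norm_besselTerm x μ k).trans_le (besselTerm_le (abs_nonneg x) μ k))
    ((Real.summable_pow_div_factorial _).mul_left _)

lemma summable_besselTerm (x : ℝ) (μ : ℕ) : Summable (besselTerm x μ) :=
  (summable_norm_besselTerm x μ).of_norm

lemma besselI_pos (μ : ℕ) {t : ℝ} (ht : 0 < t) : 0 < besselI μ t :=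
  (summable_besselTerm _ μ).tsum_pos (fun k => (besselTerm_pos (half_pos ht) μ k).le) 0
    (besselTerm_pos (half_pos ht) μ 0)

lemma besselTerm_zero_eq {x : ℝ} (hx : x ≠ 0) (μ : ℕ) :
    besselTerm x μ 0 = (μ + 1) / x * besselTerm x (μ + 1) 0 := by
  simp only [besselTerm, Nat.factorial_succ, mul_zero, zero_add, Nat.factorial_zero]
  push_cast
  field_simp
  ring

lemma besselTerm_succ_eq {x : ℝ} (hx : x ≠ 0) (μ k : ℕ) :
    besselTerm x μ (k + 1)
      = besselTerm x (μ + 2) k + (μ + 1) / x * besselTerm x (μ + 1) (k + 1) := by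
  simp only [besselTerm, show k + 1 + μ = k + μ + 1 by omega,
    show k + (μ + 2) = k + μ + 1 + 1 by omega,
    show k + 1 + (μ + 1) = k + μ + 1 + 1 by omega, Nat.factorial_succ]
  push_cast
  field_simp
  ring

lemma tsum_besselTerm_eq {x : ℝ} (hx : x ≠ 0) (μ : ℕ) :
    ∑' k, besselTerm x μ k
      = ∑' k, besselTerm x (μ + 2) k + (μ + 1) / x * ∑' k, besselTerm x (μ + 1) k := by
  rw [(summable_besselTerm x μ).tsum_eq_zero_add,
    (summable_besselTerm x (μ + 1)).tsum_eq_zero_add,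
    tsum_congr (besselTerm_succ_eq hx μ), ((summable_besselTerm x (μ + 2)).tsum_add
      (((summable_nat_add_iff 1).2 (summable_besselTerm x (μ + 1))).mul_left _)),
    tsum_mul_left, besselTerm_zero_eq hx]
  ring

lemma besselI_eq_add (μ : ℕ) {t : ℝ} (ht : t ≠ 0) :
    besselI μ t = besselI (μ + 2) t + 2 * (μ + 1) / t * besselI (μ + 1) t := by
  simp only [besselI_eq_tsum, Int.natAbs_natCast, show ((μ : ℤ) + 2).natAbs = μ + 2 by omega,
    show ((μ : ℤ) + 1).natAbs = μ + 1 by omega]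
  rw [tsum_besselTerm_eq (div_ne_zero ht two_ne_zero), div_div_eq_mul_div, mul_comm _ (2 : ℝ)]

lemma Nat.sum_range_choose_mul_choose_add (m M s : ℕ) :
    ∑ j ∈ range (m + 1), m.choose j * M.choose (j + s) = (m + M).choose (m + s) := by
  rw [Nat.add_choose_eq, Nat.sum_antidiagonal_eq_sum_range_succ_mk, ← sum_range_reflect,
    ← Finset.sum_subset (range_subset_range.2 (by omega : m + 1 ≤ m + s + 1))]
  · refine Finset.sum_congr rfl fun j hj => ?_
    rw [mem_range] at hj
    rw [Nat.choose_symm_of_eq_add (by omega : m = j + (m + 1 - 1 - j)),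
      show m + 1 - 1 - j + s = m + s - j by omega]
  · intro i _ hi
    rw [mem_range] at hi
    rw [Nat.choose_eq_zero_of_lt (by omega), zero_mul]

lemma besselTerm_mul_besselTerm (x : ℝ) (u v : ℕ) {m j : ℕ} (hj : j ≤ m) :
    besselTerm x u j * besselTerm x v (m - j)
      = x ^ (2 * m + u + v) / ((m.factorial : ℝ) * ((m + u + v).factorial : ℝ))
        * ((m.choose j : ℝ) * ((m + u + v).choose (j + u) : ℝ)) := by
  obtain ⟨k, rfl⟩ := Nat.exists_eq_add_of_le hj
  rw [Nat.cast_choose ℝ hj, Nat.cast_choose ℝ (by omega : j + u ≤ j + k + u + v),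
    show j + k + u + v - (j + u) = k + v by omega, Nat.add_sub_cancel_left, besselTerm, besselTerm,
    show 2 * (j + k) + u + v = 2 * j + u + (2 * k + v) by ring, pow_add]
  field_simp
  ring

lemma sum_besselTerm_mul_besselTerm_le (x : ℝ) (μ m : ℕ) :
    ∑ j ∈ range (m + 1), besselTerm x μ j * besselTerm x (μ + 2) (m - j)
      ≤ ∑ j ∈ range (m + 1), besselTerm x (μ + 1) j * besselTerm x (μ + 1) (m - j) := by
  set N := m + 2 * μ + 2
  have hcoeff (u v : ℕ) (huv : u + v = 2 * μ + 2) :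
      ∑ j ∈ range (m + 1), besselTerm x u j * besselTerm x v (m - j)
        = x ^ (2 * m + 2 * μ + 2) / ((m.factorial : ℝ) * (N.factorial : ℝ))
          * ((m + N).choose (m + u) : ℕ) := by
    rw [← Nat.sum_range_choose_mul_choose_add, Nat.cast_sum, mul_sum]
    refine sum_congr rfl fun j hj => ?_
    rw [besselTerm_mul_besselTerm x u v (by simpa [Nat.lt_succ_iff] using hj)]
    simp only [N, show m + u + v = m + 2 * μ + 2 by omega,
      show 2 * m + u + v = 2 * m + 2 * μ + 2 by omega]
    push_cast
    ring
  rw [hcoeff μ (μ + 2) (by ring), hcoeff (μ + 1) (μ + 1) (by ring)]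
  have hmiddle : (m + N).choose (m + μ) ≤ (m + N).choose (m + (μ + 1)) := by
    simpa [show (m + N) / 2 = m + (μ + 1) by omega] using Nat.choose_le_middle (m + μ) (m + N)
  gcongr
  exact div_nonneg (Even.pow_nonneg ⟨m + μ + 1, by ring⟩ x) (by positivity)

lemma tsum_besselTerm_mul_le_sq (x : ℝ) (μ : ℕ) :
    (∑' k, besselTerm x μ k) * ∑' k, besselTerm x (μ + 2) k
      ≤ (∑' k, besselTerm x (μ + 1) k) ^ 2 := by
  have hs := summable_norm_besselTerm x
  rw [sq, tsum_mul_tsum_eq_tsum_sum_range_of_summable_norm (hs μ) (hs (μ + 2)),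
    tsum_mul_tsum_eq_tsum_sum_range_of_summable_norm (hs (μ + 1)) (hs (μ + 1))]
  exact Summable.tsum_le_tsum (sum_besselTerm_mul_besselTerm_le x μ)
    (summable_norm_sum_mul_range_of_summable_norm (hs μ) (hs (μ + 2))).of_norm
    (summable_norm_sum_mul_range_of_summable_norm (hs (μ + 1)) (hs (μ + 1))).of_norm

lemma besselI_mul_le_sq (μ : ℕ) (t : ℝ) :
    besselI μ t * besselI (μ + 2) t ≤ besselI (μ + 1) t ^ 2 := by
  simp only [besselI_eq_tsum, Int.natAbs_natCast, show ((μ : ℤ) + 2).natAbs = μ + 2 by omega,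
    show ((μ : ℤ) + 1).natAbs = μ + 1 by omega]
  exact tsum_besselTerm_mul_le_sq (t / 2) μ

lemma sqrt_one_add_sq_sub_le {a r : ℝ} (ha : 0 ≤ a) (hr : 0 ≤ r)
    (h : 1 ≤ r ^ 2 + 2 * a * r) :
    √(1 + a ^ 2) - a ≤ r := by
  rw [sub_le_iff_le_add, Real.sqrt_le_left (by positivity)]
  nlinarith

theorem besselI_ratio_lower_bound_general (n : ℕ) (t : ℝ) (ht : 0 < t) :
    Real.sqrt (1 + (((n : ℝ) + 1) / t) ^ 2) - ((n : ℝ) + 1) / t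
      ≤ besselI (n + 1) t / besselI n t := by
  have hA : 0 < besselI n t := besselI_pos n ht
  have hB : 0 < besselI (n + 1) t := by exact_mod_cast besselI_pos (n + 1) ht
  have hrec := besselI_eq_add n ht.ne'
  have hturan := besselI_mul_le_sq n t
  rw [mul_div_assoc] at hrec
  set a := ((n : ℝ) + 1) / t
  set A := besselI n t
  set B := besselI (n + 1) t
  have hAB : A ^ 2 ≤ B ^ 2 + 2 * a * B * A := by nlinarith
  refine sqrt_one_add_sq_sub_le (by positivity) (by positivity) ?_
  field_simp
  linarith

/-- Amos's lower bound on ratios of consecutive modified Bessel functions. -/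
theorem besselI_ratio_lower_bound (n : ℕ) (hn : 1 ≤ n) (t : ℝ) (ht : 0 < t) :
    Real.sqrt (1 + (((n : ℝ) + 1) / t) ^ 2) - ((n : ℝ) + 1) / t
      ≤ besselI (n + 1) t / besselI n t :=
  besselI_ratio_lower_bound_general n t ht
end

section
/- For all integers n, d with n ≥ d/2 ≥ 0 and all t > 0, one has log(I_n(t)/I_{n-d}(t)) ≥ (1 + d)(d - 2n)/(2t). -/
open Real Finset
open scoped Nat

noncomputable def besselITerm (ν : ℕ) (t : ℝ) (k : ℕ) : ℝ :=
  (t / 2) ^ (2 * k + ν) / (k ! * (k + ν)! : ℝ)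

theorem besselI_natCast (ν : ℕ) (t : ℝ) : besselI ν t = ∑' k, besselITerm ν t k := rfl

theorem besselI_natAbs (m : ℤ) (t : ℝ) : besselI m t = besselI m.natAbs t := rfl

theorem summable_norm_besselITerm (ν : ℕ) (t : ℝ) : Summable fun k ↦ ‖besselITerm ν t k‖ := by
  refine ((Real.summable_pow_div_factorial ((t / 2) ^ 2)).mul_left (|t / 2| ^ ν)).of_nonneg_of_le
    (fun _ ↦ norm_nonneg _) fun k ↦ ?_
  have hk : (1 : ℝ) ≤ (k + ν)! := mod_cast (k + ν).factorial_pos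
  rw [besselITerm, norm_div, norm_pow, Real.norm_eq_abs, ← sq_abs, ← pow_mul, mul_div_assoc',
    ← pow_add, add_comm ν, mul_comm 2 k, Real.norm_of_nonneg (by positivity)]
  gcongr
  exact le_mul_of_one_le_right (by positivity) hk

theorem summable_besselITerm (ν : ℕ) (t : ℝ) : Summable (besselITerm ν t) :=
  (summable_norm_besselITerm ν t).of_norm

theorem besselITerm_pos {t : ℝ} (ht : 0 < t) (ν k : ℕ) : 0 < besselITerm ν t k := by
  unfold besselITerm; positivity

theorem besselI_natCast_pos {t : ℝ} (ht : 0 < t) (ν : ℕ) : 0 < besselI ν t :=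
  (summable_besselITerm ν t).tsum_pos (fun k ↦ (besselITerm_pos ht ν k).le) 0
    (besselITerm_pos ht ν 0)

theorem besselITerm_zero_eq {t : ℝ} (ht : t ≠ 0) (ν : ℕ) :
    besselITerm ν t 0 = 2 * (ν + 1) / t * besselITerm (ν + 1) t 0 := by
  simp only [besselITerm, Nat.factorial_succ, zero_add, mul_zero, Nat.factorial_zero, pow_succ]
  push_cast
  field_simp

theorem besselITerm_succ_eq {t : ℝ} (ht : t ≠ 0) (ν k : ℕ) :
    besselITerm ν t (k + 1) =
      2 * (ν + 1) / t * besselITerm (ν + 1) t (k + 1) + besselITerm (ν + 2) t k := by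
  simp only [besselITerm, show k + 1 + ν = k + ν + 1 by ring,
    show k + 1 + (ν + 1) = k + ν + 1 + 1 by ring, show k + (ν + 2) = k + ν + 1 + 1 by ring,
    Nat.factorial_succ]
  push_cast
  field_simp
  ring

theorem besselI_natCast_eq_add {t : ℝ} (ht : t ≠ 0) (ν : ℕ) :
    besselI ν t = besselI (ν + 2 : ℕ) t + 2 * (ν + 1) / t * besselI (ν + 1 : ℕ) t := by
  simp only [besselI_natCast]
  rw [(summable_besselITerm ν t).tsum_eq_zero_add,
    (summable_besselITerm (ν + 1) t).tsum_eq_zero_add,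
    besselITerm_zero_eq ht, tsum_congr (besselITerm_succ_eq ht ν),
    (((summable_nat_add_iff 1).mpr (summable_besselITerm _ t)).mul_left _).tsum_add
      (summable_besselITerm _ t), tsum_mul_left]
  ring

theorem sum_antidiagonal_choose_mul_choose_add (K M μ : ℕ) :
    ∑ p ∈ antidiagonal K, K.choose p.1 * M.choose (p.2 + μ) = (K + M).choose (K + μ) := by
  rw [Nat.add_choose_eq,
    Nat.sum_antidiagonal_eq_sum_range_succ (fun i j ↦ K.choose i * M.choose (j + μ)),
    Nat.sum_antidiagonal_eq_sum_range_succ (fun i j ↦ K.choose i * M.choose j)]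
  refine (sum_congr rfl fun j hj ↦ ?_).trans
    (sum_subset (range_subset_range.mpr (by omega)) fun j _ hj ↦ ?_)
  · rw [mem_range] at hj
    congr 2
    omega
  · rw [mem_range, not_lt] at hj
    rw [Nat.choose_eq_zero_of_lt (by omega : K < j), zero_mul]

theorem sum_antidiagonal_inv_factorial_mul (K μ μ' : ℕ) :
    ∑ p ∈ antidiagonal K, ((p.1 ! * (p.1 + μ)! * (p.2 ! * (p.2 + μ')!) : ℝ))⁻¹ =
      (2 * K + μ + μ').choose (K + μ') / (K ! * (K + μ + μ')! : ℝ) := by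
  set M := K + μ + μ'
  have hterm : ∀ p ∈ antidiagonal K, ((p.1 ! * (p.1 + μ)! * (p.2 ! * (p.2 + μ')!) : ℝ))⁻¹ =
      (K.choose p.1 * M.choose (p.2 + μ') : ℕ) / (K ! * M ! : ℝ) := by
    rintro ⟨j, k⟩ hjk
    rw [HasAntidiagonal.mem_antidiagonal] at hjk
    have hK : (K.choose j * j ! * k ! : ℝ) = K ! := by
      rw [← hjk, Nat.choose_symm_add]; exact_mod_cast Nat.add_choose_mul_factorial_mul_factorial j k
    have hM : (M.choose (k + μ') * (j + μ)! * (k + μ')! : ℝ) = M ! := by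
      rw [show M = j + μ + (k + μ') by omega]
      exact_mod_cast Nat.add_choose_mul_factorial_mul_factorial (j + μ) (k + μ')
    have hKj : (K.choose j : ℝ) ≠ 0 := mod_cast (Nat.choose_pos (by omega)).ne'
    have hMk : (M.choose (k + μ') : ℝ) ≠ 0 := mod_cast (Nat.choose_pos (by omega)).ne'
    rw [← hK, ← hM]
    push_cast
    field_simp
  rw [sum_congr rfl hterm, ← sum_div, ← Nat.cast_sum, sum_antidiagonal_choose_mul_choose_add,
    show K + M = 2 * K + μ + μ' by omega]

theorem hasSum_besselI_mul (μ μ' : ℕ) (t : ℝ) :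
    HasSum (fun K ↦ (t / 2) ^ (2 * K + μ + μ') *
        ((2 * K + μ + μ').choose (K + μ') / (K ! * (K + μ + μ')! : ℝ)))
      (besselI μ t * besselI μ' t) := by
  have h := (summable_sum_mul_antidiagonal_of_summable_norm' (summable_norm_besselITerm μ t)
    (summable_besselITerm μ t) (summable_norm_besselITerm μ' t) (summable_besselITerm μ' t)).hasSum
  rw [← tsum_mul_tsum_eq_tsum_sum_antidiagonal_of_summable_norm (summable_norm_besselITerm μ t)
    (summable_norm_besselITerm μ' t)] at h
  refine h.congr_fun fun K ↦ ?_
  rw [← sum_antidiagonal_inv_factorial_mul, mul_sum]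
  refine sum_congr rfl fun p hp ↦ ?_
  rw [HasAntidiagonal.mem_antidiagonal] at hp
  rw [besselITerm, besselITerm, div_mul_div_comm, ← pow_add, ← hp, div_eq_mul_inv]
  ring_nf

theorem besselI_mul_besselI_add_two_le_sq (ν : ℕ) (t : ℝ) :
    besselI ν t * besselI (ν + 2 : ℕ) t ≤ besselI (ν + 1 : ℕ) t ^ 2 := by
  rw [sq]
  refine hasSum_le (fun K ↦ ?_) (hasSum_besselI_mul ν (ν + 2) t)
    (hasSum_besselI_mul (ν + 1) (ν + 1) t)
  rw [show 2 * K + ν + (ν + 2) = 2 * K + (ν + 1) + (ν + 1) by ring,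
    show K + ν + (ν + 2) = K + (ν + 1) + (ν + 1) by ring]
  have hmid := Nat.choose_le_middle (K + (ν + 2)) (2 * K + (ν + 1) + (ν + 1))
  rw [show (2 * K + (ν + 1) + (ν + 1)) / 2 = K + (ν + 1) by omega] at hmid
  gcongr
  exact Even.pow_nonneg ⟨K + ν + 1, by ring⟩ _

theorem exp_neg_sq_add_two_mul_exp_neg_le_one {x : ℝ} (hx : 0 ≤ x) :
    exp (-x) ^ 2 + 2 * x * exp (-x) ≤ 1 := by
  have hsinh : exp (-x) + 2 * x ≤ exp x := by
    have := self_le_sinh_iff.mpr hx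
    rw [sinh_eq] at this
    linarith
  calc exp (-x) ^ 2 + 2 * x * exp (-x) = exp (-x) * (exp (-x) + 2 * x) := by ring
    _ ≤ exp (-x) * exp x := by gcongr
    _ = 1 := by rw [← exp_add, neg_add_cancel, exp_zero]

theorem exp_neg_mul_besselI_le_besselI_succ {t : ℝ} (ht : 0 < t) (ν : ℕ) :
    exp (-((ν + 1) / t)) * besselI ν t ≤ besselI (ν + 1 : ℕ) t := by
  have hrec := besselI_natCast_eq_add ht.ne' ν
  rw [mul_div_assoc] at hrec
  have hturan := besselI_mul_besselI_add_two_le_sq ν t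
  have hA := besselI_natCast_pos ht ν
  have hB := besselI_natCast_pos ht (ν + 1)
  set x : ℝ := (ν + 1) / t
  set A := besselI ν t
  set B := besselI (ν + 1 : ℕ) t
  set E := exp (-x)
  have hquad : A ^ 2 ≤ B ^ 2 + 2 * x * A * B := by
    nlinarith
  have hE : E ^ 2 + 2 * x * E ≤ 1 := exp_neg_sq_add_two_mul_exp_neg_le_one (by positivity)
  by_contra! hBA
  have hB2 : B ^ 2 < (E * A) ^ 2 := pow_lt_pow_left₀ hBA hB.le two_ne_zero
  have hAB : 2 * x * A * B ≤ 2 * x * A * (E * A) := by gcongr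
  nlinarith [mul_le_mul_of_nonneg_right hE (sq_nonneg A)]

theorem exp_mul_besselI_le_besselI {t : ℝ} {M N : ℕ} (ht : 0 < t) (hMN : M ≤ N) :
    exp (-((N * (N + 1) - M * (M + 1)) / (2 * t))) * besselI M t ≤ besselI N t := by
  induction N, hMN using Nat.le_induction with
  | base => simp
  | succ N _ ih =>
    calc exp (-(((N + 1 : ℕ) * ((N + 1 : ℕ) + 1) - M * (M + 1)) / (2 * t))) * besselI M t
        = exp (-((N + 1) / t)) *
            (exp (-((N * (N + 1) - M * (M + 1)) / (2 * t))) * besselI M t) := by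
          rw [← mul_assoc, ← exp_add]
          congr 2
          push_cast
          field_simp
          ring
      _ ≤ exp (-((N + 1) / t)) * besselI N t := by gcongr
      _ ≤ besselI (N + 1 : ℕ) t := exp_neg_mul_besselI_le_besselI_succ ht N

theorem log_besselI_ratio_lower_bound (n d : ℤ) (hd : 0 ≤ d) (hnd : d ≤ 2 * n)
    (t : ℝ) (ht : 0 < t) :
    (1 + (d : ℝ)) * ((d : ℝ) - 2 * (n : ℝ)) / (2 * t)
      ≤ Real.log (besselI n t / besselI (n - d) t) := by
  have hMN : (n - d).natAbs ≤ n.natAbs := by omega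
  have hIM := besselI_natCast_pos ht (n - d).natAbs
  rw [besselI_natAbs n, besselI_natAbs (n - d),
    le_log_iff_exp_le (div_pos (besselI_natCast_pos ht _) hIM), le_div_iff₀ hIM]
  refine le_trans ?_ (exp_mul_besselI_le_besselI ht hMN)
  gcongr
  rw [← neg_div]
  gcongr
  push_cast [Nat.cast_natAbs, abs_of_nonneg (by omega : 0 ≤ n)]
  have hd' : (0 : ℝ) ≤ d := mod_cast hd
  have hnd' : (d : ℝ) ≤ 2 * n := mod_cast hnd
  rcases abs_cases ((n : ℝ) - d) with ⟨h, _⟩ | ⟨h, _⟩ <;> rw [h] <;> nlinarith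
end

section
/- Let h : ℤ → ℝ be a function that is odd about the point d/2 (i.e., h(d/2 - k) = -h(d/2 + k) for all k, with d even) and satisfies h(n) ≤ 0 for all n ≥ d/2. Let M be a symmetric unimodal integer-valued random variable. Then E[h(M)] ≥ 0. -/
set_option maxHeartbeats 1000000


/-- If `h : ℤ → ℝ` is odd about the point `e = d/2` (with `d = 2e` even) and
nonpositive to the right of `e`, then its expectation under any symmetric
unimodal integer-valued random variable is nonnegative. -/
theorem expectation_nonneg_of_odd_about
    (e : ℤ) (he : 0 ≤ e) (h : ℤ → ℝ)
    (hodd : ∀ k : ℤ, h (e - k) = - h (e + k))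
    (hneg : ∀ n : ℤ, e ≤ n → h n ≤ 0)
    (p : ℤ → ℝ) (hp0 : ∀ m, 0 ≤ p m) (hp1 : ∑' m : ℤ, p m = 1)
    (hsymm : ∀ m, p (-m) = p m)
    (hunimodal : ∀ m m' : ℤ, m.natAbs ≤ m'.natAbs → p m' ≤ p m)
    (hsum : Summable fun m : ℤ => p m * h m) :
    0 ≤ ∑' m : ℤ, p m * h m := by
  set g : ℤ → ℝ := fun m => p m * h m with hg
  have aux : ∀ k : ℤ, 0 ≤ k → 0 ≤ g (e + k) + g (e - k) := by
    intro k hk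
    have h1 : h (e - k) = - h (e + k) := hodd k
    have h2 : h (e + k) ≤ 0 := hneg _ (by linarith)
    have h3 : (e - k).natAbs ≤ (e + k).natAbs := by omega
    have h4 : p (e + k) ≤ p (e - k) := hunimodal _ _ h3
    have : g (e + k) + g (e - k) = (p (e - k) - p (e + k)) * (- h (e + k)) := by
      simp only [hg, h1]; ring
    rw [this]
    exact mul_nonneg (by linarith) (by linarith)
  have key : ∀ m : ℤ, 0 ≤ g m + g (2 * e - m) := by
    intro m
    rcases le_or_gt e m with hm | hm
    · have := aux (m - e) (by linarith)
      have e1 : e + (m - e) = m := by ring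
      have e2 : e - (m - e) = 2 * e - m := by ring
      rwa [e1, e2] at this
    · have := aux (e - m) (by linarith)
      have e1 : e + (e - m) = 2 * e - m := by ring
      have e2 : e - (e - m) = m := by ring
      rw [e1, e2] at this
      linarith
  have hrefl : (∑' m : ℤ, g (2 * e - m)) = ∑' m : ℤ, g m :=
    (Equiv.subLeft (2 * e)).tsum_eq g
  have hsum2 : Summable fun m : ℤ => g (2 * e - m) :=
    (Equiv.subLeft (2 * e)).summable_iff.mpr hsum
  have hsum3 : Summable fun m : ℤ => g m + g (2 * e - m) := hsum.add hsum2
  have htot : 0 ≤ ∑' m : ℤ, (g m + g (2 * e - m)) := tsum_nonneg key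
  rw [Summable.tsum_add hsum hsum2, hrefl] at htot
  linarith
end
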